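/- arXiv:2012.05040 — 2 statements merged into one kernel-verified Lean document; each statement's English description precedes it below -/
import Mathlib

section
/- Define w_m = ∫_{-1}^1 ((P_{2m}(x) - P_{2m}(0))/x)^2 dx, where P_k is the k-th Legendre polynomial. Then the sequence (w_m) satisfies the recurrence 4(m+1)^2 w_{m+1} = 2(4m+3) + (2m+1)^2 w_m for all m ≥ 0, with initial condition w_0 = 0. -/
open MeasureTheory Real

/-- The Legendre polynomials, defined by the three-term recurrence
`(n+1) P_{n+1}(x) = (2n+1) x P_n(x) - n P_{n-1}(x)` with `P_0 = 1`, `P_1 = x`. -/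
noncomputable def legendreP : ℕ → ℝ → ℝ
  | 0, _ => 1
  | 1, x => x
  | n + 2, x =>
      ((2 * (n : ℝ) + 3) * x * legendreP (n + 1) x - ((n : ℝ) + 1) * legendreP n x) / ((n : ℝ) + 2)

/-- `w m = ∫_{-1}^1 ((P_{2m}(x) - P_{2m}(0))/x)^2 dx`. -/
noncomputable def legendreW (m : ℕ) : ℝ :=
  ∫ x in (-1 : ℝ)..1, ((legendreP (2 * m) x - legendreP (2 * m) 0) / x) ^ 2

/-!
Write `Q_n = (P_n - P_n(0)) / X`, i.e. `Polynomial.divX P_n`. Since `divX` is linear and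
`divX (X * p) = p`, the three-term recurrence becomes
`(n+2) Q_{n+2} = (2n+3) P_{n+1} - (n+1) Q_n`. Squaring and integrating over `[-1, 1]`, the cross
term vanishes because `deg Q_n < n + 1`, and `∫ P_{n+1}^2 = 2/(2n+3)`; with `n = 2m` this is the
recurrence for `w_m`.

Orthogonality of `P_n` to polynomials of lower degree comes from Legendre's differential equation:
`P_n` is an eigenvector, with eigenvalue `-n(n+1)`, of `L p = ((1 - x^2) p')'`, which is symmetric
for `∫_{-1}^1` because `1 - x^2` vanishes at `±1`. The norms then follow from the recurrence.
-/

open Polynomial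

theorem Polynomial.divX_X_mul {R : Type*} [Semiring R] (p : R[X]) : divX (X * p) = p := by
  ext n
  simp [coeff_divX, coeff_X_mul]

theorem Polynomial.eval_divX {K : Type*} [Field K] (p : K[X]) {x : K} (hx : x ≠ 0) :
    (divX p).eval x = (p.eval x - p.eval 0) / x := by
  have h := congrArg (eval x) (X_mul_divX_add p)
  rw [eval_add, eval_mul, eval_X, eval_C, coeff_zero_eq_eval_zero] at h
  rw [eq_div_iff hx]
  linear_combination h

noncomputable def legendrePoly : ℕ → ℝ[X]
  | 0 => 1
  | 1 => X
  | n + 2 => C ((n : ℝ) + 2)⁻¹ *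
      (C (2 * (n : ℝ) + 3) * X * legendrePoly (n + 1) - C ((n : ℝ) + 1) * legendrePoly n)

theorem legendrePoly_recurrence (n : ℕ) :
    C ((n : ℝ) + 2) * legendrePoly (n + 2) =
      C (2 * (n : ℝ) + 3) * X * legendrePoly (n + 1) - C ((n : ℝ) + 1) * legendrePoly n := by
  rw [legendrePoly, ← mul_assoc, ← C_mul, mul_inv_cancel₀ (by positivity), C_1, one_mul]

theorem eval_legendrePoly : ∀ (n : ℕ) (x : ℝ), (legendrePoly n).eval x = legendreP n x
  | 0, x => by simp [legendreP, legendrePoly]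
  | 1, x => by simp [legendreP, legendrePoly]
  | n + 2, x => by
    simp only [legendreP, legendrePoly, eval_mul, eval_sub, eval_C, eval_X,
      eval_legendrePoly (n + 1) x, eval_legendrePoly n x]
    field_simp

theorem natDegree_legendrePoly_le : ∀ n, (legendrePoly n).natDegree ≤ n
  | 0 => by simp [legendrePoly]
  | 1 => by simp [legendrePoly]
  | n + 2 => by
    have h₁ := natDegree_legendrePoly_le (n + 1)
    have h₀ := natDegree_legendrePoly_le n
    rw [legendrePoly]
    refine (natDegree_C_mul_le _ _).trans <| (natDegree_sub_le _ _).trans <| max_le ?_ ?_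
    · refine natDegree_mul_le.trans ?_
      have := (natDegree_C_mul_le (2 * (n : ℝ) + 3) X).trans natDegree_X_le
      omega
    · exact (natDegree_C_mul_le _ _).trans (by omega)

theorem legendrePoly_derivative_recurrences (n : ℕ) :
    derivative (legendrePoly (n + 1)) =
        X * derivative (legendrePoly n) + ((n : ℝ[X]) + 1) * legendrePoly n ∧
      X * derivative (legendrePoly (n + 1)) =
        derivative (legendrePoly n) + ((n : ℝ[X]) + 1) * legendrePoly (n + 1) := by
  induction n with
  | zero => simp [legendrePoly]
  | succ n ih =>
    obtain ⟨hA, hD⟩ := ih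
    have hrec := legendrePoly_recurrence n
    simp only [map_add, map_mul, map_natCast, map_ofNat, map_one] at hrec
    have hrec' := congrArg derivative hrec
    simp only [derivative_mul, derivative_add, derivative_natCast, derivative_ofNat, derivative_X,
      derivative_sub, derivative_one, zero_mul, zero_add, add_zero, mul_one, mul_zero] at hrec'
    have hA' : derivative (legendrePoly (n + 2)) =
        X * derivative (legendrePoly (n + 1)) + ((n : ℝ[X]) + 2) * legendrePoly (n + 1) := by
      refine mul_left_cancel₀ (C_ne_zero.mpr (by positivity : (n : ℝ) + 2 ≠ 0)) ?_
      simp only [map_add, map_natCast, map_ofNat]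
      linear_combination hrec' + ((n : ℝ[X]) + 1) * hD
    push_cast
    exact ⟨by linear_combination hA', by linear_combination X * hA' - hrec + X * hD - hA⟩

noncomputable def legendreOperator (p : ℝ[X]) : ℝ[X] :=
  derivative ((1 - X ^ 2) * derivative p)

theorem legendreOperator_legendrePoly (n : ℕ) :
    legendreOperator (legendrePoly n) = C (-((n : ℝ) * (n + 1))) * legendrePoly n := by
  obtain ⟨hA, hD⟩ := legendrePoly_derivative_recurrences n
  have h : (1 - X ^ 2) * derivative (legendrePoly n) =
      ((n : ℝ[X]) + 1) * (X * legendrePoly n - legendrePoly (n + 1)) := by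
    linear_combination X * hA - hD
  rw [legendreOperator, h]
  simp only [derivative_mul, derivative_natCast, derivative_one, derivative_X, derivative_sub,
    map_neg, map_mul, map_add, map_natCast, map_one]
  linear_combination (-((n : ℝ[X]) + 1)) * hA

-- For `k < 2` the truncated exponent `k - 2` is harmless: its coefficient vanishes.
theorem legendreOperator_X_pow : ∀ k : ℕ,
    legendreOperator (X ^ k) =
      C ((k : ℝ) * (k - 1)) * X ^ (k - 2) - C ((k : ℝ) * (k + 1)) * X ^ k
  | 0 => by simp [legendreOperator]
  | 1 => by simp [legendreOperator]
  | k + 2 => by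
    simp only [legendreOperator, derivative_X_pow, derivative_mul, derivative_sub, derivative_one,
      derivative_C]
    simp only [map_natCast, map_mul, map_add, map_sub, map_one]
    push_cast
    ring

noncomputable def integralNegOneOne : ℝ[X] →ₗ[ℝ] ℝ where
  toFun p := ∫ x in (-1 : ℝ)..1, p.eval x
  map_add' p q := by
    simp only [eval_add]
    exact intervalIntegral.integral_add (p.continuous.intervalIntegrable _ _)
      (q.continuous.intervalIntegrable _ _)
  map_smul' a p := by simp [intervalIntegral.integral_const_mul]

theorem integralNegOneOne_apply (p : ℝ[X]) :
    integralNegOneOne p = ∫ x in (-1 : ℝ)..1, p.eval x := rfl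

theorem integralNegOneOne_C_mul (a : ℝ) (p : ℝ[X]) :
    integralNegOneOne (C a * p) = a * integralNegOneOne p := by
  rw [← smul_eq_C_mul, map_smul, smul_eq_mul]

theorem integralNegOneOne_derivative (p : ℝ[X]) :
    integralNegOneOne (derivative p) = p.eval 1 - p.eval (-1) :=
  intervalIntegral.integral_eq_sub_of_hasDerivAt (fun x _ => p.hasDerivAt x)
    ((derivative p).continuous.intervalIntegrable _ _)

theorem integralNegOneOne_legendreOperator_mul (p q : ℝ[X]) :
    integralNegOneOne (legendreOperator p * q) = integralNegOneOne (p * legendreOperator q) := by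
  have hF : legendreOperator p * q - p * legendreOperator q =
      derivative ((1 - X ^ 2) * (derivative p * q - p * derivative q)) := by
    simp only [legendreOperator, derivative_mul, derivative_sub]
    ring
  rw [← sub_eq_zero, ← map_sub, hF, integralNegOneOne_derivative]
  simp

theorem integralNegOneOne_X_pow_mul_legendrePoly_eq_zero {n k : ℕ} (hk : k < n) :
    integralNegOneOne (X ^ k * legendrePoly n) = 0 := by
  induction k using Nat.strong_induction_on with
  | _ k ih =>
    -- symmetry of `L` gives `(n(n+1) - k(k+1)) ∫ x^k P_n = k(k-1) ∫ x^(k-2) P_n`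
    have h := integralNegOneOne_legendreOperator_mul (X ^ k) (legendrePoly n)
    rw [legendreOperator_X_pow, legendreOperator_legendrePoly, mul_left_comm, sub_mul, mul_assoc,
      mul_assoc, map_sub, integralNegOneOne_C_mul, integralNegOneOne_C_mul,
      integralNegOneOne_C_mul] at h
    have hlow : (k : ℝ) * (k - 1) * integralNegOneOne (X ^ (k - 2) * legendrePoly n) = 0 := by
      rcases lt_or_ge k 2 with hk2 | hk2
      · interval_cases k <;> simp
      · rw [ih (k - 2) (by omega) (by omega), mul_zero]
    have hne : (k : ℝ) * (k + 1) ≠ n * (n + 1) := by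
      have : (k : ℝ) < n := by exact_mod_cast hk
      nlinarith
    have : ((n : ℝ) * (n + 1) - k * (k + 1)) * integralNegOneOne (X ^ k * legendrePoly n) = 0 :=
      by linear_combination h - hlow
    exact (mul_eq_zero.mp this).resolve_left (sub_ne_zero.mpr hne.symm)

theorem integralNegOneOne_mul_legendrePoly_eq_zero {q : ℝ[X]} {n : ℕ} (hq : q.natDegree < n) :
    integralNegOneOne (q * legendrePoly n) = 0 := by
  rw [as_sum_range_C_mul_X_pow' q hq, Finset.sum_mul, map_sum]
  refine Finset.sum_eq_zero fun k hk => ?_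
  rw [mul_assoc, integralNegOneOne_C_mul,
    integralNegOneOne_X_pow_mul_legendrePoly_eq_zero (Finset.mem_range.mp hk), mul_zero]

theorem integralNegOneOne_legendrePoly_mul_legendrePoly_eq_zero {m n : ℕ} (h : m < n) :
    integralNegOneOne (legendrePoly m * legendrePoly n) = 0 :=
  integralNegOneOne_mul_legendrePoly_eq_zero ((natDegree_legendrePoly_le m).trans_lt h)

theorem integralNegOneOne_legendrePoly_add_two_mul (n : ℕ) (q : ℝ[X]) :
    ((n : ℝ) + 2) * integralNegOneOne (legendrePoly (n + 2) * q) =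
      (2 * n + 3) * integralNegOneOne (X * legendrePoly (n + 1) * q) -
        (n + 1) * integralNegOneOne (legendrePoly n * q) := by
  have h := congrArg (fun r => integralNegOneOne (r * q)) (legendrePoly_recurrence n)
  simpa only [sub_mul, mul_assoc, map_sub, integralNegOneOne_C_mul] using h

theorem integralNegOneOne_legendrePoly_mul_self_add_two (n : ℕ) :
    (2 * (n : ℝ) + 5) * integralNegOneOne (legendrePoly (n + 2) * legendrePoly (n + 2)) =
      (2 * n + 3) * integralNegOneOne (legendrePoly (n + 1) * legendrePoly (n + 1)) := by
  have h₁ := integralNegOneOne_legendrePoly_add_two_mul n (legendrePoly (n + 2))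
  have h₂ := integralNegOneOne_legendrePoly_add_two_mul (n + 1) (legendrePoly (n + 1))
  rw [integralNegOneOne_legendrePoly_mul_legendrePoly_eq_zero (m := n) (by omega), mul_zero,
    sub_zero] at h₁
  rw [mul_comm (legendrePoly (n + 1 + 2)), integralNegOneOne_legendrePoly_mul_legendrePoly_eq_zero
    (by omega : n + 1 < n + 1 + 2), mul_zero, mul_right_comm X] at h₂
  push_cast at h₂
  refine mul_left_cancel₀ (by positivity : (n : ℝ) + 2 ≠ 0) ?_
  linear_combination (2 * (n : ℝ) + 5) * h₁ - (2 * (n : ℝ) + 3) * h₂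

theorem integralNegOneOne_legendrePoly_mul_self (n : ℕ) :
    integralNegOneOne (legendrePoly n * legendrePoly n) = 2 / (2 * n + 1) := by
  induction n using Nat.twoStepInduction with
  | zero => simp [legendrePoly, integralNegOneOne_apply]; norm_num
  | one => simp [legendrePoly, integralNegOneOne_apply, ← sq]; norm_num
  | more n _ ih =>
    have h := integralNegOneOne_legendrePoly_mul_self_add_two n
    rw [ih] at h
    push_cast at h ⊢
    have h₃ : (2 * (n : ℝ) + 3) * (2 / (2 * (n + 1) + 1)) = 2 := by field_simp; ring
    rw [eq_div_iff (by positivity)]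
    linear_combination h + h₃

theorem divX_legendrePoly_recurrence (n : ℕ) :
    C ((n : ℝ) + 2) * divX (legendrePoly (n + 2)) =
      C (2 * (n : ℝ) + 3) * legendrePoly (n + 1) - C ((n : ℝ) + 1) * divX (legendrePoly n) := by
  have h := congrArg divX_hom (legendrePoly_recurrence n)
  simpa only [map_sub, divX_hom_toFun, divX_C_mul, mul_assoc, divX_X_mul] using h

theorem integralNegOneOne_divX_legendrePoly_mul_self_recurrence (n : ℕ) :
    ((n : ℝ) + 2) ^ 2 *
        integralNegOneOne (divX (legendrePoly (n + 2)) * divX (legendrePoly (n + 2))) =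
      2 * (2 * n + 3) + ((n : ℝ) + 1) ^ 2 *
        integralNegOneOne (divX (legendrePoly n) * divX (legendrePoly n)) := by
  set P := legendrePoly (n + 1)
  set Q := divX (legendrePoly n)
  set Q' := divX (legendrePoly (n + 2))
  have hsq : C (((n : ℝ) + 2) ^ 2) * (Q' * Q') =
      C ((2 * (n : ℝ) + 3) ^ 2) * (P * P) - C (2 * (2 * (n : ℝ) + 3) * (n + 1)) * (Q * P) +
        C (((n : ℝ) + 1) ^ 2) * (Q * Q) := by
    calc C (((n : ℝ) + 2) ^ 2) * (Q' * Q') = (C ((n : ℝ) + 2) * Q') ^ 2 := by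
          rw [map_pow]; ring
      _ = _ := by
          rw [divX_legendrePoly_recurrence]
          simp only [map_pow, map_mul, map_ofNat]
          ring
  have hQP : integralNegOneOne (Q * P) = 0 := integralNegOneOne_mul_legendrePoly_eq_zero <|
    (natDegree_divX_le.trans (natDegree_legendrePoly_le n)).trans_lt n.lt_succ_self
  have hPP : integralNegOneOne (P * P) = 2 / (2 * (n + 1 : ℝ) + 1) := by
    simpa using integralNegOneOne_legendrePoly_mul_self (n + 1)
  have h := congrArg integralNegOneOne hsq
  simp only [map_add, map_sub, integralNegOneOne_C_mul, hQP, hPP] at h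
  have hP : (2 * (n : ℝ) + 3) ^ 2 * (2 / (2 * (n + 1 : ℝ) + 1)) = 2 * (2 * n + 3) := by
    field_simp; ring
  linear_combination h + hP

theorem legendreW_eq_integralNegOneOne (m : ℕ) :
    legendreW m =
      integralNegOneOne (divX (legendrePoly (2 * m)) * divX (legendrePoly (2 * m))) := by
  rw [legendreW, integralNegOneOne_apply]
  refine intervalIntegral.integral_congr_ae ?_
  filter_upwards [Measure.ae_ne volume 0] with x hx _
  rw [eval_mul, eval_divX _ hx, eval_legendrePoly, eval_legendrePoly, sq]

theorem legendreW_recurrence :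
    legendreW 0 = 0 ∧
      ∀ m : ℕ, 4 * ((m : ℝ) + 1) ^ 2 * legendreW (m + 1)
        = 2 * (4 * (m : ℝ) + 3) + (2 * (m : ℝ) + 1) ^ 2 * legendreW m := by
  refine ⟨by simp [legendreW, legendreP], fun m => ?_⟩
  have h := integralNegOneOne_divX_legendrePoly_mul_self_recurrence (2 * m)
  rw [legendreW_eq_integralNegOneOne, legendreW_eq_integralNegOneOne, Nat.mul_succ]
  push_cast at h
  linear_combination h
end

section
/- For every natural number n ≥ 1, ∑_{k=2}^{n} ((-1)^k/(k-1)) · binom(n,k) = n·(H_n - 1), where H_n is the n-th harmonic number. -/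
/-!
Pascal's rule turns the sum `S n` on the left into the recursion `S (n + 1) = S n + T n` with
`T n = ∑_{k=1}^n (-1)^(k+1)/k · C(n,k)`, and one level down into `T (n + 1) = T n + 1/(n+1)`,
because `C(n,k)/(k+1) = C(n+1,k+1)/(n+1)` reduces `∑ (-1)^k/(k+1) · C(n,k)` to the vanishing
alternating sum of `C(n+1,·)`. Hence `T n = H_n`, and `n (H_n - 1)` satisfies the recursion of `S`.
-/

open Finset

/-- The harmonic number `H_n = 1 + 1/2 + ⋯ + 1/n`. -/
noncomputable def harmonicNum (n : ℕ) : ℝ := ∑ j ∈ Finset.Icc 1 n, (1 : ℝ) / j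

theorem sum_Icc_mul_choose_succ {R : Type*} [NonAssocSemiring R] (f : ℕ → R) (a n : ℕ) :
    ∑ k ∈ Icc (a + 1) (n + 1), f k * ((n + 1).choose k : R)
      = ∑ k ∈ Icc (a + 1) n, f k * (n.choose k : R)
        + ∑ k ∈ Icc a n, f (k + 1) * (n.choose k : R) := by
  have shift (g : ℕ → R) : ∑ k ∈ Icc (a + 1) (n + 1), g k = ∑ k ∈ Icc a n, g (k + 1) := by
    rw [← map_add_right_Icc, sum_map]
    rfl
  have drop_top : ∑ k ∈ Icc (a + 1) (n + 1), f k * (n.choose k : R)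
      = ∑ k ∈ Icc (a + 1) n, f k * (n.choose k : R) := by
    refine (sum_subset (Icc_subset_Icc_right n.le_succ) fun k hk hkn => ?_).symm
    have : n < k := by simp only [mem_Icc] at hk hkn; omega
    simp [Nat.choose_eq_zero_of_lt this]
  simp only [← drop_top, shift, Nat.choose_succ_succ, Nat.cast_add, mul_add, sum_add_distrib]
  exact add_comm _ _

theorem sum_range_neg_one_pow_div_succ_mul_choose (n : ℕ) :
    ∑ k ∈ range (n + 1), (-1 : ℝ) ^ k / (k + 1) * (n.choose k : ℝ) = 1 / (n + 1) := by
  have absorb : ∀ k ∈ range (n + 1), (-1 : ℝ) ^ k / (k + 1) * (n.choose k : ℝ)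
      = 1 / (n + 1) * -((-1 : ℝ) ^ (k + 1) * ((n + 1).choose (k + 1) : ℝ)) := fun k _ => by
    have h : ((n : ℝ) + 1) * n.choose k = (n + 1).choose (k + 1) * (k + 1) := by
      exact_mod_cast Nat.add_one_mul_choose_eq n k
    field_simp
    linear_combination (-1 : ℝ) ^ k * h
  have alternating : ∑ k ∈ range (n + 2), (-1 : ℝ) ^ k * ((n + 1).choose k : ℝ) = 0 := by
    exact_mod_cast Int.alternating_sum_range_choose_of_ne n.succ_ne_zero
  rw [sum_range_succ'] at alternating
  rw [sum_congr rfl absorb, ← mul_sum, sum_neg_distrib]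
  simp only [pow_zero, Nat.choose_zero_right, Nat.cast_one, mul_one] at alternating
  rw [eq_neg_of_add_eq_zero_left alternating]
  ring

theorem harmonicNum_succ (n : ℕ) :
    harmonicNum (n + 1) = harmonicNum n + 1 / (n + 1 : ℝ) := by
  rw [harmonicNum, sum_Icc_succ_top (by omega), ← harmonicNum]
  push_cast
  ring

theorem harmonicNum_eq_sum_Icc_alternating_choose (n : ℕ) :
    harmonicNum n = ∑ k ∈ Icc 1 n, (-1 : ℝ) ^ (k + 1) / k * (n.choose k : ℝ) := by
  induction n with
  | zero => simp [harmonicNum]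
  | succ n ih =>
    rw [sum_Icc_mul_choose_succ, ← ih, harmonicNum_succ,
      ← sum_range_neg_one_pow_div_succ_mul_choose, range_eq_Ico, Ico_add_one_right_eq_Icc]
    congr 1
    refine sum_congr rfl fun k _ => ?_
    push_cast
    ring

theorem alternating_binomial_sum_km1_general (n : ℕ) :
    ∑ k ∈ Finset.Icc 2 n, (-1 : ℝ) ^ k / ((k : ℝ) - 1) * (n.choose k : ℝ)
      = n * (harmonicNum n - 1) := by
  induction n with
  | zero => simp
  | succ n ih =>
    have shifted :
        ∑ k ∈ Icc 1 n, (-1 : ℝ) ^ (k + 1) / (((k + 1 : ℕ) : ℝ) - 1) * (n.choose k : ℝ)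
          = harmonicNum n := by
      simp only [harmonicNum_eq_sum_Icc_alternating_choose, Nat.cast_add, Nat.cast_one,
        add_sub_cancel_right]
    rw [sum_Icc_mul_choose_succ, ih, shifted, harmonicNum_succ]
    push_cast
    field_simp
    ring

theorem alternating_binomial_sum_km1 (n : ℕ) (hn : 1 ≤ n) :
    ∑ k ∈ Finset.Icc 2 n, (-1 : ℝ) ^ k / ((k : ℝ) - 1) * (n.choose k : ℝ)
      = n * (harmonicNum n - 1) :=
  alternating_binomial_sum_km1_general n
end
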